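/- arXiv:0705.1485 — 4 statements merged into one kernel-verified Lean document; each statement's English description precedes it below -/
import Mathlib

section
/- In the Artin group A_k of dihedral type (k ≥ 3), every element w can be written as w = w₁⋯wₙ Δʳ for some r ∈ ℤ and w₁,…,wₙ ∈ M⁺, where M⁺ = {prod(a,b;i), prod(b,a;i) : 1 ≤ i ≤ k−1} and Δ = prod(a,b;k). -/
/-- Alternating product `prodd s t n = stst⋯` with `n` factors. -/
def prodd {G : Type*} [Monoid G] : G → G → ℕ → G
  | _, _, 0 => 1
  | s, t, n + 1 => s * prodd t s n

/-- The single relation `prod(a,b;k) = prod(b,a;k)` of the dihedral Artin group. -/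
def ArtinRels (k : ℕ) : Set (FreeGroup Bool) :=
  {prodd (FreeGroup.of true) (FreeGroup.of false) k *
    (prodd (FreeGroup.of false) (FreeGroup.of true) k)⁻¹}

/-- The Artin group of dihedral type `A_k`. -/
abbrev Artin (k : ℕ) : Type := PresentedGroup (ArtinRels k)

def Artin.a (k : ℕ) : Artin k := PresentedGroup.of true
def Artin.b (k : ℕ) : Artin k := PresentedGroup.of false

/-- The Garside element `Δ = prod(a,b;k)`. -/
def Artin.Delta (k : ℕ) : Artin k := prodd (Artin.a k) (Artin.b k) k

/-- The set `M⁺` of proper alternating positive words of length `1,…,k-1`. -/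
def Mplus (k : ℕ) : Set (Artin k) :=
  {w | ∃ i, 1 ≤ i ∧ i ≤ k - 1 ∧
    (w = prodd (Artin.a k) (Artin.b k) i ∨ w = prodd (Artin.b k) (Artin.a k) i)}

/-- The Artin generating set `{a, b, a⁻¹, b⁻¹}`. -/
def artinGens (k : ℕ) : Set (Artin k) :=
  {Artin.a k, Artin.b k, (Artin.a k)⁻¹, (Artin.b k)⁻¹}

/-- Word length of `w` with respect to a generating set `S` (assumed symmetric). -/
noncomputable def wordLength {G : Type*} [Group G] (S : Set G) (w : G) : ℕ :=
  sInf {n | ∃ l : List G, l.length = n ∧ (∀ g ∈ l, g ∈ S) ∧ l.prod = w}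

/-- `x = Δ^r z₁⋯zₘ` is a left normal form: the factors lie in `M⁺` and the number
of factors is minimal among all such decompositions. -/
def IsLeftNF (k : ℕ) (x : Artin k) (r : ℤ) (zs : List (Artin k)) : Prop :=
  (∀ z ∈ zs, z ∈ Mplus k) ∧ x = Artin.Delta k ^ r * zs.prod ∧
    ∀ (r' : ℤ) (zs' : List (Artin k)), (∀ z ∈ zs', z ∈ Mplus k) →
      x = Artin.Delta k ^ r' * zs'.prod → zs.length ≤ zs'.length

/-- The number of canonical factors of length `i` in the list of factors `zs`. -/
noncomputable def countLen {k : ℕ} (zs : List (Artin k)) (i : ℕ) : ℕ :=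
  Nat.card {j : Fin zs.length //
    zs.get j = prodd (Artin.a k) (Artin.b k) i ∨ zs.get j = prodd (Artin.b k) (Artin.a k) i}

/-- The vector `π`: `piOf r zs j = r + m_{k-1} + ⋯ + m_{k-j}`. -/
noncomputable def piOf (k : ℕ) (r : ℤ) (zs : List (Artin k)) (j : ℕ) : ℤ :=
  r + ∑ t ∈ Finset.range j, (countLen zs (k - 1 - t) : ℤ)

/-!
In any monoid, the braid relation `prod(s,t;k) = prod(t,s;k)` makes `Δ = prod(s,t;k)` fix `s` and
`t` under conjugation when `k` is even and swap them when `k` is odd. Hence conjugation by `Δ`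
permutes `M⁺`, and `Δʳ p = p' Δʳ` for every product `p` of elements of `M⁺`, with `p'` again such
a product. So the elements `p Δʳ` form a submonoid of `A_k`; it contains `a`, `b` and also
`a⁻¹ = prod(b,a;k-1) Δ⁻¹`, `b⁻¹ = prod(a,b;k-1) Δ⁻¹`, hence is all of `A_k`.
-/

section Alternating

variable {M : Type*} [Monoid M]

theorem MonoidHom.map_prodd {N : Type*} [Monoid N] (f : M →* N) (s t : M) (n : ℕ) :
    f (prodd s t n) = prodd (f s) (f t) n := by
  induction n generalizing s t with
  | zero => simp [prodd]
  | succ n ih => simp [prodd, ih]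

theorem prodd_succ_right (s t : M) (n : ℕ) :
    prodd s t (n + 1) = prodd s t n * if Even n then s else t := by
  induction n generalizing s t with
  | zero => simp [prodd]
  | succ n ih =>
    rw [prodd, ih, prodd, mul_assoc]
    by_cases hn : Even n <;> simp [hn, Nat.even_add_one]

theorem SemiconjBy.prodd {d s t s' t' : M} (hs : SemiconjBy d s s') (ht : SemiconjBy d t t')
    (n : ℕ) : SemiconjBy d (prodd s t n) (prodd s' t' n) := by
  induction n generalizing s t s' t' with
  | zero => exact SemiconjBy.one_right d
  | succ n ih => exact hs.mul_right (ih ht hs)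

theorem semiconjBy_prodd_of_braid {s t : M} {k : ℕ} (h : prodd s t k = prodd t s k) :
    SemiconjBy (prodd s t k) s (if Even k then s else t) := by
  unfold SemiconjBy
  by_cases hk : Even k
  · calc prodd s t k * s = prodd s t (k + 1) := by rw [prodd_succ_right, if_pos hk]
      _ = _ := by rw [prodd, ← h, if_pos hk]
  · calc prodd s t k * s = prodd t s (k + 1) := by rw [prodd_succ_right, if_neg hk, h]
      _ = _ := by rw [prodd, if_neg hk]

theorem exists_semiconjBy_prodd_of_braid {s t : M} {k : ℕ} (h : prodd s t k = prodd t s k)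
    (i : ℕ) : ∃ y ∈ ({prodd s t i, prodd t s i} : Set M),
      SemiconjBy (prodd s t k) (prodd s t i) y ∧ SemiconjBy (prodd s t k) y (prodd s t i) := by
  have hs := semiconjBy_prodd_of_braid h
  have ht := semiconjBy_prodd_of_braid h.symm
  rw [← h] at ht
  have hst := hs.prodd ht i
  have hts := ht.prodd hs i
  by_cases hk : Even k
  · simp only [hk, if_true] at hst
    exact ⟨prodd s t i, Or.inl rfl, hst, hst⟩
  · simp only [hk, if_false] at hst hts
    exact ⟨prodd t s i, Or.inr rfl, hst, hts⟩

end Alternating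

theorem inv_eq_prodd_mul_inv_prodd {G : Type*} [Group G] (s t : G) {k : ℕ} (hk : 0 < k) :
    s⁻¹ = prodd t s (k - 1) * (prodd s t k)⁻¹ := by
  obtain ⟨n, rfl⟩ := Nat.exists_eq_add_of_lt hk
  simp [prodd]

namespace Artin

open Pointwise ConjAct

theorem prodd_a_b_eq_prodd_b_a (k : ℕ) : prodd (a k) (b k) k = prodd (b k) (a k) k := by
  have h := PresentedGroup.mk_eq_mk_of_mul_inv_mem (Set.mem_singleton _ : _ ∈ ArtinRels k)
  rwa [MonoidHom.map_prodd, MonoidHom.map_prodd] at h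

variable {k : ℕ}

theorem exists_mem_Mplus_semiconjBy_Delta {x : Artin k} (hx : x ∈ Mplus k) :
    ∃ y ∈ Mplus k, SemiconjBy (Delta k) x y ∧ SemiconjBy (Delta k) y x := by
  have hab := prodd_a_b_eq_prodd_b_a k
  obtain ⟨i, hi1, hi2, rfl | rfl⟩ := hx
  · obtain ⟨y, hy, hxy⟩ := exists_semiconjBy_prodd_of_braid hab i
    refine ⟨y, ?_, hxy⟩
    rcases hy with rfl | rfl
    exacts [⟨i, hi1, hi2, Or.inl rfl⟩, ⟨i, hi1, hi2, Or.inr rfl⟩]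
  · obtain ⟨y, hy, hxy⟩ := exists_semiconjBy_prodd_of_braid hab.symm i
    rw [← hab] at hxy
    refine ⟨y, ?_, hxy⟩
    rcases hy with rfl | rfl
    exacts [⟨i, hi1, hi2, Or.inr rfl⟩, ⟨i, hi1, hi2, Or.inl rfl⟩]

theorem toConjAct_Delta_smul_Mplus : toConjAct (Delta k) • Mplus k = Mplus k := by
  ext x
  constructor
  · rintro ⟨y, hy, rfl⟩
    obtain ⟨z, hz, hyz, -⟩ := exists_mem_Mplus_semiconjBy_Delta hy
    simp only [smul_def, ofConjAct_toConjAct]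
    rwa [hyz, mul_inv_cancel_right]
  · intro hx
    obtain ⟨z, hz, -, hzx⟩ := exists_mem_Mplus_semiconjBy_Delta hx
    refine ⟨z, hz, ?_⟩
    simp only [smul_def, ofConjAct_toConjAct]
    rw [hzx, mul_inv_cancel_right]

theorem exists_zpow_Delta_mul_eq_mul_zpow_Delta (n : ℤ) {p : Artin k}
    (hp : p ∈ Submonoid.closure (Mplus k)) :
    ∃ q ∈ Submonoid.closure (Mplus k), Delta k ^ n * p = q * Delta k ^ n := by
  have hstab : toConjAct (Delta k ^ n) • Mplus k = Mplus k := by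
    rw [map_zpow]
    exact MulAction.mem_stabilizer_iff.1
      (zpow_mem (MulAction.mem_stabilizer_iff.2 toConjAct_Delta_smul_Mplus) n)
  refine ⟨toConjAct (Delta k ^ n) • p, ?_,
    by rw [smul_def, ofConjAct_toConjAct, inv_mul_cancel_right]⟩
  rw [← hstab, ← Submonoid.smul_closure]
  exact Submonoid.smul_mem_pointwise_smul _ _ _ hp

theorem of_mem_Mplus (hk : 2 ≤ k) (j : Bool) : (PresentedGroup.of j : Artin k) ∈ Mplus k := by
  cases j
  · exact ⟨1, le_rfl, by omega, Or.inr (mul_one _).symm⟩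
  · exact ⟨1, le_rfl, by omega, Or.inl (mul_one _).symm⟩

theorem exists_inv_of_eq_mul_inv_Delta (hk : 2 ≤ k) (j : Bool) :
    ∃ y ∈ Mplus k, (PresentedGroup.of j : Artin k)⁻¹ = y * (Delta k)⁻¹ := by
  cases j
  · refine ⟨prodd (a k) (b k) (k - 1), ⟨k - 1, by omega, le_rfl, Or.inl rfl⟩, ?_⟩
    rw [Delta, prodd_a_b_eq_prodd_b_a]
    exact inv_eq_prodd_mul_inv_prodd (b k) (a k) (by omega)
  · exact ⟨prodd (b k) (a k) (k - 1), ⟨k - 1, by omega, le_rfl, Or.inr rfl⟩,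
      inv_eq_prodd_mul_inv_prodd (a k) (b k) (by omega)⟩

theorem exists_mem_closure_Mplus_mul_zpow_Delta (hk : 2 ≤ k) (x : Artin k) :
    ∃ p ∈ Submonoid.closure (Mplus k), ∃ r : ℤ, x = p * Delta k ^ r := by
  have hx : x ∈ Subgroup.closure (Set.range PresentedGroup.of) := by
    rw [PresentedGroup.closure_range_of]
    trivial
  induction hx using Subgroup.closure_induction'' with
  | mem x hx =>
    obtain ⟨j, rfl⟩ := hx
    exact ⟨_, Submonoid.subset_closure (of_mem_Mplus hk j), 0, by rw [zpow_zero, mul_one]⟩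
  | inv_mem x hx =>
    obtain ⟨j, rfl⟩ := hx
    obtain ⟨y, hy, h⟩ := exists_inv_of_eq_mul_inv_Delta hk j
    exact ⟨y, Submonoid.subset_closure hy, -1, by rw [h, zpow_neg_one]⟩
  | one => exact ⟨1, one_mem _, 0, by simp⟩
  | mul x y _ _ hx hy =>
    obtain ⟨p, hp, r, rfl⟩ := hx
    obtain ⟨q, hq, s, rfl⟩ := hy
    obtain ⟨q', hq', h⟩ := exists_zpow_Delta_mul_eq_mul_zpow_Delta r hq
    refine ⟨p * q', mul_mem hp hq', r + s, ?_⟩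
    rw [zpow_add, mul_assoc p, ← mul_assoc _ q, h]
    simp only [mul_assoc]

end Artin

theorem exists_right_normal_decomposition (k : ℕ) (hk : 3 ≤ k) (w : Artin k) :
    ∃ (r : ℤ) (ws : List (Artin k)),
      (∀ z ∈ ws, z ∈ Mplus k) ∧ w = ws.prod * Artin.Delta k ^ r := by
  obtain ⟨p, hp, r, rfl⟩ := Artin.exists_mem_closure_Mplus_mul_zpow_Delta (by omega) w
  obtain ⟨ws, hws, rfl⟩ := Submonoid.exists_list_of_mem_closure hp
  exact ⟨r, ws, hws, rfl⟩
end

section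
/- Let w = δʳ w₁⋯wₛ be an element of the dihedral Artin group A_k written in left normal form with respect to the dual Garside structure, where δ = σ₁σ₂ is the dual Garside element and each wⱼ ∈ {σ₁,…,σ_k}. Then the word length of w with respect to the dual generators {σ₁^{±1},…,σ_k^{±1}} equals |r| + |r+s|. -/
/-- The relations `σᵢσᵢ₊₁ = σ₁σ₂` (indices mod `k`) of the dual presentation. -/
def DualRels (k : ℕ) [NeZero k] : Set (FreeGroup (Fin k)) :=
  {x | ∃ i : Fin k, x = FreeGroup.of i * FreeGroup.of (i + 1) *
    (FreeGroup.of 0 * FreeGroup.of 1)⁻¹}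

/-- The dihedral Artin group with its dual presentation
`⟨σ₁,…,σ_k ∣ σ₁σ₂ = σ₂σ₃ = ⋯ = σ_kσ₁⟩`. -/
abbrev DualArtin (k : ℕ) [NeZero k] : Type := PresentedGroup (DualRels k)

/-- The dual generator `σᵢ` (indexed by `Fin k`). -/
def sig {k : ℕ} [NeZero k] (i : Fin k) : DualArtin k := PresentedGroup.of i

/-- The dual Garside element `δ = σ₁σ₂`. -/
def dualDelta (k : ℕ) [NeZero k] : DualArtin k := sig 0 * sig 1

/-- The dual generating set `{σ₁^{±1},…,σ_k^{±1}}`. -/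
def dualGens (k : ℕ) [NeZero k] : Set (DualArtin k) :=
  {x | ∃ i : Fin k, x = sig i ∨ x = (sig i)⁻¹}

/-- A word in the dual generators: `(i, true)` stands for `σᵢ`, `(i, false)` for `σᵢ⁻¹`. -/
def evalWord {k : ℕ} [NeZero k] (y : List (Fin k × Bool)) : DualArtin k :=
  (y.map fun p => if p.2 then sig p.1 else (sig p.1)⁻¹).prod

/-- A word is freely reduced if no letter is immediately followed by its inverse. -/
def FreelyReduced {k : ℕ} [NeZero k] (y : List (Fin k × Bool)) : Prop :=
  y.Chain' fun p q => ¬(q.1 = p.1 ∧ q.2 = !p.2)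

/-- `dualPoss y`: the length of the longest element of `{σ₁,…,σ_k,δ}` (with the `σᵢ`
of length 1 and `δ` of length 2) obtainable as a product of consecutive letters of `y`. -/
noncomputable def dualPoss {k : ℕ} [NeZero k] (y : List (Fin k × Bool)) : ℕ :=
  sSup ({0} ∪ {n | ∃ u : List (Fin k × Bool), u ≠ [] ∧ u.IsInfix y ∧
    ((n = 1 ∧ ∃ j : Fin k, evalWord u = sig j) ∨ (n = 2 ∧ evalWord u = dualDelta k))})

/-- `dualNegg y`: the analogue of `dualPoss` for `{σ₁⁻¹,…,σ_k⁻¹,δ⁻¹}`. -/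
noncomputable def dualNegg {k : ℕ} [NeZero k] (y : List (Fin k × Bool)) : ℕ :=
  sSup ({0} ∪ {n | ∃ u : List (Fin k × Bool), u ≠ [] ∧ u.IsInfix y ∧
    ((n = 1 ∧ ∃ j : Fin k, evalWord u = (sig j)⁻¹) ∨ (n = 2 ∧ evalWord u = (dualDelta k)⁻¹))})

/-- `y` is a geodesic word: its length equals the word length of the element it represents. -/
def IsGeodesicWord {k : ℕ} [NeZero k] (y : List (Fin k × Bool)) : Prop :=
  wordLength (dualGens k) (evalWord y) = y.length

/-- `w = δ^r w₁⋯wₛ` is a left dual normal form: the `wⱼ` are positive dual generators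
and `s` is minimal among all such decompositions. -/
def IsDualLNF {k : ℕ} [NeZero k] (w : DualArtin k) (r : ℤ) (ws : List (DualArtin k)) : Prop :=
  (∀ x ∈ ws, ∃ i : Fin k, x = sig i) ∧ w = dualDelta k ^ r * ws.prod ∧
    ∀ (r' : ℤ) (ws' : List (DualArtin k)), (∀ x ∈ ws', ∃ i : Fin k, x = sig i) →
      w = dualDelta k ^ r' * ws'.prod → ws.length ≤ ws'.length

/-!
Conjugation by `δ` permutes the atoms `σᵢ` (`σᵢ δ = δ σᵢ₊₂`), and `σᵢ⁻¹ = δ⁻¹ σᵢ₋₁`. Hence a word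
of length `n` in the `σᵢ^{±1}` can be rewritten as `δᵐ` times `n` atoms, so `s ≤ n` by minimality
of the normal form; and the exponent sum `σᵢ ↦ 1` gives `|2r + s| ≤ n`. Together these say
`|r| + |r + s| ≤ n`. Conversely, when `r < 0`, each of the first `min s (-r)` atoms can be traded
for `δ` times a negative letter (`σᵢ = δ σᵢ₊₁⁻¹`), and the remaining power of `δ = σ₁σ₂` is spelled
with two letters per factor; this word has length exactly `|r| + |r + s|`.
-/

open Pointwise

section Group

variable {G : Type*} [Group G] {a : G} {S : Set G}

theorem Subgroup.mem_normalizer_inv (ha : a ∈ Subgroup.normalizer S) :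
    a ∈ Subgroup.normalizer S⁻¹ := by
  rw [Subgroup.mem_set_normalizer_iff] at ha ⊢
  intro n
  simpa [mul_assoc] using ha n⁻¹

theorem exists_mul_zpow_eq_zpow_mul (ha : a ∈ Subgroup.normalizer S) {x : G} (hx : x ∈ S)
    (m : ℤ) : ∃ y ∈ S, x * a ^ m = a ^ m * y :=
  ⟨a ^ (-m) * x * a ^ m,
    by simpa using (Subgroup.mem_set_normalizer_iff''.mp (zpow_mem ha m) x).mp hx,
    by group⟩

theorem List.exists_prod_eq_zpow_mul_prod (ha : a ∈ Subgroup.normalizer S) {l : List G}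
    (hl : ∀ g ∈ l, g ∈ S ∨ a * g ∈ S) :
    ∃ (m : ℤ) (v : List G), (∀ x ∈ v, x ∈ S) ∧ v.length = l.length ∧ l.prod = a ^ m * v.prod := by
  induction l with
  | nil => exact ⟨0, [], by simp, rfl, by simp⟩
  | cons g l ih =>
    obtain ⟨m, v, hv, hlen, hprod⟩ := ih fun x hx => hl x (List.mem_cons_of_mem _ hx)
    rcases hl g List.mem_cons_self with hg | hg
    · obtain ⟨y, hy, hgy⟩ := exists_mul_zpow_eq_zpow_mul ha hg m
      refine ⟨m, y :: v, List.forall_mem_cons.mpr ⟨hy, hv⟩, by simp [hlen], ?_⟩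
      rw [List.prod_cons, List.prod_cons, hprod, ← mul_assoc, hgy, mul_assoc]
    · obtain ⟨y, hy, hgy⟩ := exists_mul_zpow_eq_zpow_mul ha hg m
      refine ⟨m - 1, y :: v, List.forall_mem_cons.mpr ⟨hy, hv⟩, by simp [hlen], ?_⟩
      calc (g :: l).prod = a⁻¹ * (a * g * a ^ m) * v.prod := by rw [List.prod_cons, hprod]; group
        _ = a ^ (m - 1) * (y :: v).prod := by rw [hgy, List.prod_cons]; group

theorem List.exists_prod_eq_zpow_length_mul_prod (ha : a ∈ Subgroup.normalizer S) {v : List G}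
    (hv : ∀ x ∈ v, a⁻¹ * x ∈ S) :
    ∃ u : List G, (∀ y ∈ u, y ∈ S) ∧ u.length = v.length ∧
      v.prod = a ^ (v.length : ℤ) * u.prod := by
  induction v with
  | nil => exact ⟨[], by simp, rfl, by simp⟩
  | cons x v ih =>
    obtain ⟨u, hu, hlen, hprod⟩ := ih fun x hx => hv x (List.mem_cons_of_mem _ hx)
    obtain ⟨y, hy, hxy⟩ := exists_mul_zpow_eq_zpow_mul ha (hv x List.mem_cons_self) v.length
    refine ⟨y :: u, List.forall_mem_cons.mpr ⟨hy, hu⟩, by simp [hlen], ?_⟩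
    calc (x :: v).prod = a * (a⁻¹ * x * a ^ (v.length : ℤ)) * u.prod := by
          rw [List.prod_cons, hprod]; group
      _ = a ^ ((x :: v).length : ℤ) * (y :: u).prod := by
          rw [hxy, List.prod_cons, List.length_cons]; push_cast; group

theorem wordLength_prod_le {l : List G} (hl : ∀ g ∈ l, g ∈ S) : wordLength S l.prod ≤ l.length :=
  Nat.sInf_le ⟨l, rfl, hl, rfl⟩

theorem le_wordLength {w : G} {n : ℕ} (hw : ∃ l : List G, (∀ g ∈ l, g ∈ S) ∧ l.prod = w)
    (h : ∀ l : List G, (∀ g ∈ l, g ∈ S) → l.prod = w → n ≤ l.length) : n ≤ wordLength S w := by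
  obtain ⟨l, hl, rfl⟩ := hw
  exact le_csInf ⟨_, l, rfl, hl, rfl⟩ fun _ ⟨l', hlen, hl', hprod⟩ => hlen ▸ h l' hl' hprod

theorem exists_list_prod_eq_mul_zpow {x y : G} (hx : x ∈ S) (hy : y ∈ S) (hx' : x⁻¹ ∈ S)
    (hy' : y⁻¹ ∈ S) (m : ℤ) :
    ∃ l : List G, (∀ g ∈ l, g ∈ S) ∧ l.length = 2 * m.natAbs ∧ l.prod = (x * y) ^ m := by
  obtain ⟨n, rfl | rfl⟩ := Int.eq_nat_or_neg m
  · refine ⟨(List.replicate n [x, y]).flatten, ?_, ?_, ?_⟩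
    · simp only [List.mem_flatten, List.mem_replicate]
      rintro g ⟨_, ⟨-, rfl⟩, hg⟩
      rcases List.mem_pair.mp hg with rfl | rfl <;> assumption
    · simp [List.sum_replicate, mul_comm]
    · simp [List.prod_flatten]
  · refine ⟨(List.replicate n [y⁻¹, x⁻¹]).flatten, ?_, ?_, ?_⟩
    · simp only [List.mem_flatten, List.mem_replicate]
      rintro g ⟨_, ⟨-, rfl⟩, hg⟩
      rcases List.mem_pair.mp hg with rfl | rfl <;> assumption
    · simp [List.sum_replicate, mul_comm]
    · simp [List.prod_flatten, ← mul_inv_rev, inv_pow]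

theorem natAbs_toAdd_map_prod_le (f : G →* Multiplicative ℤ)
    (hS : ∀ g ∈ S, (f g).toAdd.natAbs ≤ 1) {l : List G} (hl : ∀ g ∈ l, g ∈ S) :
    (f l.prod).toAdd.natAbs ≤ l.length := by
  induction l with
  | nil => simp
  | cons g l ih =>
    have hg := hS g (hl g List.mem_cons_self)
    have hl' := ih fun x hx => hl x (List.mem_cons_of_mem _ hx)
    simp only [List.prod_cons, map_mul, toAdd_mul, List.length_cons]
    omega

end Group

namespace DualArtin

variable {k : ℕ} [NeZero k]

variable (k) in
def posGens : Set (DualArtin k) := {x | ∃ i : Fin k, x = sig i}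

theorem dualGens_eq_union : dualGens k = posGens k ∪ (posGens k)⁻¹ := by
  ext x
  simp [dualGens, posGens, inv_eq_iff_eq_inv, exists_or]

theorem sig_mul_sig_add_one (i : Fin k) : sig i * sig (i + 1) = dualDelta k := by
  have hrel : PresentedGroup.mk (DualRels k)
      (FreeGroup.of i * FreeGroup.of (i + 1) * (FreeGroup.of 0 * FreeGroup.of 1)⁻¹) = 1 :=
    (QuotientGroup.eq_one_iff _).mpr (Subgroup.subset_normalClosure ⟨i, rfl⟩)
  rw [map_mul, map_mul, map_inv, map_mul] at hrel
  exact mul_inv_eq_one.mp hrel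

open Fin.CommRing in
theorem sig_mul_dualDelta (i : Fin k) : sig i * dualDelta k = dualDelta k * sig (i + 2) := by
  calc sig i * dualDelta k = sig i * (sig (i + 1) * sig (i + 1 + 1)) := by
        rw [sig_mul_sig_add_one]
    _ = dualDelta k * sig (i + 2) := by
        rw [← mul_assoc, sig_mul_sig_add_one, show i + 1 + 1 = i + 2 by ring]

theorem dualDelta_mem_normalizer_posGens : dualDelta k ∈ Subgroup.normalizer (posGens k) := by
  refine Subgroup.mem_set_normalizer_iff''.mpr fun x => ⟨?_, ?_⟩
  · rintro ⟨i, rfl⟩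
    exact ⟨i + 2, by rw [mul_assoc, sig_mul_dualDelta, inv_mul_cancel_left]⟩
  · rintro ⟨j, hj⟩
    refine ⟨j - 2, ?_⟩
    have hconj := sig_mul_dualDelta (j - 2)
    rw [sub_add_cancel] at hconj
    calc x = dualDelta k * ((dualDelta k)⁻¹ * x * dualDelta k) * (dualDelta k)⁻¹ := by group
      _ = sig (j - 2) := by rw [hj, ← hconj, mul_inv_cancel_right]

theorem dualDelta_mul_mem_posGens {g : DualArtin k} (hg : g ∈ (posGens k)⁻¹) :
    dualDelta k * g ∈ posGens k := by
  obtain ⟨i, hi⟩ := hg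
  refine ⟨i - 1, ?_⟩
  rw [inv_eq_iff_eq_inv.mp hi, ← sig_mul_sig_add_one (i - 1), sub_add_cancel, mul_inv_cancel_right]

theorem inv_dualDelta_mul_mem_inv_posGens {x : DualArtin k} (hx : x ∈ posGens k) :
    (dualDelta k)⁻¹ * x ∈ (posGens k)⁻¹ := by
  obtain ⟨i, rfl⟩ := hx
  refine ⟨i + 1, ?_⟩
  rw [← sig_mul_sig_add_one i, mul_inv_rev, inv_inv, inv_mul_cancel_left]

theorem exists_prod_eq_dualDelta_zpow_mul_prod {l : List (DualArtin k)}
    (hl : ∀ g ∈ l, g ∈ dualGens k) :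
    ∃ (m : ℤ) (v : List (DualArtin k)), (∀ x ∈ v, x ∈ posGens k) ∧ v.length = l.length ∧
      l.prod = dualDelta k ^ m * v.prod :=
  l.exists_prod_eq_zpow_mul_prod dualDelta_mem_normalizer_posGens fun g hg =>
    (dualGens_eq_union (k := k) ▸ hl g hg).imp id dualDelta_mul_mem_posGens

theorem exists_word_eq_dualDelta_zpow_mul_prod (r : ℤ) {v : List (DualArtin k)}
    (hv : ∀ x ∈ v, x ∈ posGens k) {t : ℕ} (ht : t ≤ v.length) :
    ∃ l : List (DualArtin k), (∀ g ∈ l, g ∈ dualGens k) ∧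
      l.length = 2 * (r + t).natAbs + v.length ∧ l.prod = dualDelta k ^ r * v.prod := by
  obtain ⟨u, hu, hulen, hprod⟩ := (v.take t).exists_prod_eq_zpow_length_mul_prod
    (Subgroup.mem_normalizer_inv dualDelta_mem_normalizer_posGens)
    fun x hx => inv_dualDelta_mul_mem_inv_posGens (hv x (List.mem_of_mem_take hx))
  obtain ⟨d, hd, hdlen, hdprod⟩ := exists_list_prod_eq_mul_zpow (S := dualGens k)
    ⟨0, .inl rfl⟩ ⟨1, .inl rfl⟩ ⟨0, .inr rfl⟩ ⟨1, .inr rfl⟩ (r + t)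
  refine ⟨d ++ u ++ v.drop t, ?_, ?_, ?_⟩
  · rw [dualGens_eq_union] at hd ⊢
    simp only [List.mem_append]
    rintro g ((hg | hg) | hg)
    · exact hd g hg
    · exact .inr (hu g hg)
    · exact .inl (hv g (List.mem_of_mem_drop hg))
  · simp only [List.length_append, hdlen, hulen, List.length_take, List.length_drop]
    omega
  · rw [List.prod_append, List.prod_append, mul_assoc, ← v.take_append_drop t, List.prod_append,
      hdprod, hprod, List.length_take, min_eq_left ht, zpow_add, List.take_append_drop]
    simp only [dualDelta, mul_assoc]

variable (k) in
def expSum : DualArtin k →* Multiplicative ℤ :=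
  PresentedGroup.toGroup (f := fun _ => Multiplicative.ofAdd 1) <| by
    rintro _ ⟨i, rfl⟩
    simp only [map_mul, map_inv, FreeGroup.lift_apply_of]
    group

theorem expSum_sig (i : Fin k) : expSum k (sig i) = Multiplicative.ofAdd 1 :=
  PresentedGroup.toGroup.of _

theorem natAbs_toAdd_expSum_prod_le {l : List (DualArtin k)} (hl : ∀ g ∈ l, g ∈ dualGens k) :
    (expSum k l.prod).toAdd.natAbs ≤ l.length :=
  natAbs_toAdd_map_prod_le (expSum k) (by rintro _ ⟨i, rfl | rfl⟩ <;> simp [expSum_sig]) hl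

theorem toAdd_expSum_dualDelta_zpow_mul_prod (r : ℤ) {v : List (DualArtin k)}
    (hv : ∀ x ∈ v, x ∈ posGens k) :
    (expSum k (dualDelta k ^ r * v.prod)).toAdd = 2 * r + v.length := by
  have hv' : (v.map (expSum k)).prod = Multiplicative.ofAdd 1 ^ v.length := by
    rw [List.prod_eq_pow_card _ _ ?_, List.length_map]
    simp only [List.mem_map]
    rintro _ ⟨x, hx, rfl⟩
    obtain ⟨i, rfl⟩ := hv x hx
    exact expSum_sig i
  simp only [dualDelta, map_mul, map_zpow, map_list_prod, hv', expSum_sig, toAdd_mul, toAdd_zpow,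
    toAdd_pow, toAdd_ofAdd, smul_eq_mul, nsmul_eq_mul]
  ring

end DualArtin

theorem dual_word_length_formula_general (k : ℕ) [NeZero k]
    (w : DualArtin k) (r : ℤ) (ws : List (DualArtin k)) (h : IsDualLNF w r ws) :
    wordLength (dualGens k) w = r.natAbs + (r + ws.length).natAbs := by
  obtain ⟨hpos, rfl, hmin⟩ := h
  obtain ⟨l, hl, hlen, hprod⟩ :=
    DualArtin.exists_word_eq_dualDelta_zpow_mul_prod r hpos (min_le_left ws.length (-r).toNat)
  apply le_antisymm
  · calc wordLength (dualGens k) _ ≤ l.length := hprod ▸ wordLength_prod_le hl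
      _ = _ := by omega
  · refine le_wordLength ⟨l, hl, hprod⟩ fun l' hl' hprod' => ?_
    obtain ⟨m, v, hv, hvlen, hl'v⟩ := DualArtin.exists_prod_eq_dualDelta_zpow_mul_prod hl'
    have hs : ws.length ≤ v.length := hmin m v hv (hprod' ▸ hl'v)
    have hexp := DualArtin.natAbs_toAdd_expSum_prod_le hl'
    rw [hprod', DualArtin.toAdd_expSum_dualDelta_zpow_mul_prod r hpos] at hexp
    omega

theorem dual_word_length_formula (k : ℕ) [NeZero k] (hk : 3 ≤ k)
    (w : DualArtin k) (r : ℤ) (ws : List (DualArtin k)) (h : IsDualLNF w r ws) :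
    wordLength (dualGens k) w = r.natAbs + (r + ws.length).natAbs :=
  dual_word_length_formula_general k w r ws h
end

section
/- Every word in the positive dual generators {σ₁,…,σ_k} of the dihedral Artin group A_k (that is, a word with no negative letters) is a geodesic word with respect to the dual generating set {σ₁^{±1},…,σ_k^{±1}}. -/
/-!
The defining relations are homogeneous, so the exponent sum `σᵢ ↦ 1` is a homomorphism
`A_k → ℤ`. It is at most `1` on every dual generator or its inverse, hence bounded by the length
of any word for an element; on a positive word it equals the length.
-/

section WordLength

variable {G : Type*} [Group G] (S : Set G)

theorem wordLength_eq_length_of_forall_le (l₀ : List G) (hS₀ : ∀ g ∈ l₀, g ∈ S)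
    (hmin : ∀ l : List G, (∀ g ∈ l, g ∈ S) → l.prod = l₀.prod → l₀.length ≤ l.length) :
    wordLength S l₀.prod = l₀.length := by
  have hmem : l₀.length ∈ {n | ∃ l : List G, l.length = n ∧ (∀ g ∈ l, g ∈ S) ∧
      l.prod = l₀.prod} := ⟨l₀, rfl, hS₀, rfl⟩
  refine le_antisymm (Nat.sInf_le hmem) (le_csInf ⟨_, hmem⟩ ?_)
  rintro n ⟨l, rfl, hS, hprod⟩
  exact hmin l hS hprod

variable {S}

theorem toAdd_map_prod_le_length (φ : G →* Multiplicative ℤ)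
    (hφ : ∀ s ∈ S, (φ s).toAdd ≤ 1) (l : List G) (hS : ∀ g ∈ l, g ∈ S) :
    (φ l.prod).toAdd ≤ l.length := by
  induction l with
  | nil => simp
  | cons g l ih =>
    have hg := hφ g (hS g List.mem_cons_self)
    have hl := ih fun x hx => hS x (List.mem_cons_of_mem g hx)
    simp only [List.prod_cons, map_mul, toAdd_mul, List.length_cons, Nat.cast_succ]
    linarith

theorem wordLength_eq_length_of_toAdd_map_prod_eq (φ : G →* Multiplicative ℤ)
    (hφ : ∀ s ∈ S, (φ s).toAdd ≤ 1) (l₀ : List G) (hS₀ : ∀ g ∈ l₀, g ∈ S)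
    (hl₀ : (φ l₀.prod).toAdd = l₀.length) :
    wordLength S l₀.prod = l₀.length :=
  wordLength_eq_length_of_forall_le S l₀ hS₀ fun l hS hprod => by
    have := toAdd_map_prod_le_length φ hφ l hS
    rw [hprod, hl₀] at this
    exact_mod_cast this

end WordLength

section ExponentSum

variable {k : ℕ} [NeZero k]

theorem lift_dualRels_eq_one : ∀ r ∈ DualRels k,
    FreeGroup.lift (fun _ : Fin k => Multiplicative.ofAdd (1 : ℤ)) r = 1 := by
  rintro r ⟨i, rfl⟩
  simp only [map_mul, map_inv, FreeGroup.lift_apply_of]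
  group

def exponentSum (k : ℕ) [NeZero k] : DualArtin k →* Multiplicative ℤ :=
  PresentedGroup.toGroup lift_dualRels_eq_one

theorem exponentSum_sig (i : Fin k) : exponentSum k (sig i) = Multiplicative.ofAdd 1 :=
  PresentedGroup.toGroup.of lift_dualRels_eq_one

theorem toAdd_exponentSum_le_one : ∀ s ∈ dualGens k, (exponentSum k s).toAdd ≤ 1 := by
  rintro s ⟨i, rfl | rfl⟩ <;> simp [exponentSum_sig]

theorem evalWord_eq_prod_sig {y : List (Fin k × Bool)} (hpos : ∀ p ∈ y, p.2 = true) :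
    evalWord y = (y.map fun p => sig p.1).prod := by
  unfold evalWord
  congr 1
  exact List.map_congr_left fun p hp => by simp [hpos p hp]

theorem toAdd_exponentSum_prod_sig (y : List (Fin k × Bool)) :
    (exponentSum k (y.map fun p => sig p.1).prod).toAdd = y.length := by
  simp [map_list_prod, Function.comp_def, exponentSum_sig]

end ExponentSum

theorem positive_words_are_geodesic_general (k : ℕ) [NeZero k]
    (y : List (Fin k × Bool)) (hpos : ∀ p ∈ y, p.2 = true) :
    IsGeodesicWord y := by
  have hgens : ∀ g ∈ y.map fun p => sig p.1, g ∈ dualGens k := by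
    simp only [List.mem_map]
    rintro _ ⟨p, -, rfl⟩
    exact ⟨p.1, Or.inl rfl⟩
  have h := wordLength_eq_length_of_toAdd_map_prod_eq (exponentSum k)
    toAdd_exponentSum_le_one _ hgens (by simpa using toAdd_exponentSum_prod_sig y)
  rw [IsGeodesicWord, evalWord_eq_prod_sig hpos, h, List.length_map]

theorem positive_words_are_geodesic (k : ℕ) [NeZero k] (hk : 3 ≤ k)
    (y : List (Fin k × Bool)) (hpos : ∀ p ∈ y, p.2 = true) :
    IsGeodesicWord y :=
  positive_words_are_geodesic_general k y hpos
end

section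
/- In the dihedral Artin group A_k with dual generating set, for every element w with left dual normal form δʳ w₁⋯wₛ and every dual generator g, writing wg in left dual normal form δ^{r'} w'₁⋯w'_{s'}, exactly one of the following holds: (r',s') = (r+1, s−1), (r, s+1), (r, s−1), or (r−1, s+1); hence |r'|+|r'+s'| differs from |r|+|r+s| by at most 1. -/
/-
Proof idea: the relations give `σᵢσᵢ₊₁ = δ`, so conjugation by `δ` permutes the positive
generators (`δσⱼδ⁻¹ = σⱼ₋₂`) and `σⱼ⁻¹ = σⱼ₊₁δ⁻¹`. Hence multiplying `δʳ w₁⋯wₛ` on the right by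
any dual generator yields a decomposition with `s + 1` positive letters, so minimality gives
`|s' - s| ≤ 1`. The homomorphism to `ℤ` sending every `σᵢ` to `1` sends `δʳ w₁⋯wₛ` to `2r + s`
and the generator `g` to `±1`; so `2r' + s' = 2r + s ± 1`, which by parity rules out `s' = s`
and then determines `r'`.
-/

variable {k : ℕ} [NeZero k]

def IsPositiveWord (ws : List (DualArtin k)) : Prop :=
  ∀ x ∈ ws, ∃ i : Fin k, x = sig i

lemma IsPositiveWord.append {ws ws₂ : List (DualArtin k)} (h : IsPositiveWord ws)
    (h₂ : IsPositiveWord ws₂) : IsPositiveWord (ws ++ ws₂) := by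
  intro x hx
  rcases List.mem_append.mp hx with hx | hx
  exacts [h x hx, h₂ x hx]

lemma isPositiveWord_singleton (i : Fin k) : IsPositiveWord [sig i] := by
  intro x hx
  exact ⟨i, List.mem_singleton.mp hx⟩

lemma sig_mul_sig_add_one (i : Fin k) : sig i * sig (i + 1) = dualDelta k := by
  have hrel := PresentedGroup.one_of_mem (rels := DualRels k) ⟨i, rfl⟩
  simp only [map_mul, map_inv] at hrel
  exact mul_inv_eq_one.mp hrel

lemma inv_sig (i : Fin k) : (sig i)⁻¹ = sig (i + 1) * (dualDelta k)⁻¹ := by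
  rw [← sig_mul_sig_add_one i]
  group

lemma dualDelta_conj_sig (j : Fin k) :
    MulAut.conj (dualDelta k) (sig j) = sig (j - 2) := by
  have hj : j - 2 + 1 + 1 = j := by open Fin.CommRing in ring
  have h₁ := sig_mul_sig_add_one (j - 2)
  have h₂ := sig_mul_sig_add_one (j - 2 + 1)
  rw [hj] at h₂
  rw [MulAut.conj_apply, mul_inv_eq_iff_eq_mul, ← h₂, ← mul_assoc, h₁, ← h₂]

lemma IsPositiveWord.map_conj_dualDelta {ws : List (DualArtin k)} (h : IsPositiveWord ws) :
    IsPositiveWord (ws.map (MulAut.conj (dualDelta k))) := by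
  intro x hx
  obtain ⟨y, hy, rfl⟩ := List.mem_map.mp hx
  obtain ⟨i, rfl⟩ := h y hy
  exact ⟨i - 2, dualDelta_conj_sig i⟩

lemma exists_mul_mem_dualGens {r : ℤ} {ws : List (DualArtin k)} (hws : IsPositiveWord ws)
    {g : DualArtin k} (hg : g ∈ dualGens k) :
    ∃ (r₂ : ℤ) (ws₂ : List (DualArtin k)), IsPositiveWord ws₂ ∧
      ws₂.length = ws.length + 1 ∧ dualDelta k ^ r * ws.prod * g = dualDelta k ^ r₂ * ws₂.prod := by
  obtain ⟨i, rfl | rfl⟩ := hg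
  · exact ⟨r, ws ++ [sig i], hws.append (isPositiveWord_singleton i), by simp, by simp [mul_assoc]⟩
  · set L := ws ++ [sig (i + 1)]
    refine ⟨r - 1, L.map (MulAut.conj (dualDelta k)),
      (hws.append (isPositiveWord_singleton _)).map_conj_dualDelta, by simp [L], ?_⟩
    rw [← map_list_prod, MulAut.conj_apply, inv_sig]
    simp only [L, List.prod_append, List.prod_singleton, zpow_sub_one]
    group

variable (k) in
noncomputable def dualDegree : DualArtin k →* Multiplicative ℤ :=
  PresentedGroup.toGroup (f := fun _ => Multiplicative.ofAdd 1) (by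
    rintro _ ⟨i, rfl⟩
    simp only [map_mul, map_inv, FreeGroup.lift_apply_of, mul_inv_cancel])

lemma dualDegree_sig (i : Fin k) : dualDegree k (sig i) = Multiplicative.ofAdd 1 :=
  PresentedGroup.toGroup.of _

lemma IsPositiveWord.dualDegree_prod {ws : List (DualArtin k)} (h : IsPositiveWord ws) :
    dualDegree k ws.prod = Multiplicative.ofAdd (ws.length : ℤ) := by
  induction ws with
  | nil => simp
  | cons x t ih =>
    obtain ⟨i, rfl⟩ := h x List.mem_cons_self
    rw [List.prod_cons, map_mul, dualDegree_sig, ih fun y hy => h y (List.mem_cons_of_mem _ hy),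
      ← ofAdd_add, List.length_cons, Nat.cast_succ, add_comm]

lemma dualDegree_dualDelta : dualDegree k (dualDelta k) = Multiplicative.ofAdd 2 := by
  rw [dualDelta, map_mul, dualDegree_sig, dualDegree_sig]
  rfl

lemma dualDegree_of_mem_dualGens {g : DualArtin k} (hg : g ∈ dualGens k) :
    (dualDegree k g).toAdd = 1 ∨ (dualDegree k g).toAdd = -1 := by
  obtain ⟨i, rfl | rfl⟩ := hg <;> simp [dualDegree_sig]

lemma inv_mem_dualGens {g : DualArtin k} (hg : g ∈ dualGens k) : g⁻¹ ∈ dualGens k := by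
  obtain ⟨i, rfl | rfl⟩ := hg
  exacts [⟨i, Or.inr rfl⟩, ⟨i, Or.inl (inv_inv _).symm⟩]

namespace IsDualLNF

variable {w : DualArtin k} {r : ℤ} {ws : List (DualArtin k)}

lemma dualDegree_eq (h : IsDualLNF w r ws) :
    (dualDegree k w).toAdd = 2 * r + ws.length := by
  rw [h.2.1, map_mul, map_zpow, dualDegree_dualDelta, IsPositiveWord.dualDegree_prod h.1,
    toAdd_mul, toAdd_zpow, toAdd_ofAdd, toAdd_ofAdd, smul_eq_mul, mul_comm]

lemma length_le_of_mul {g : DualArtin k} {r' : ℤ} {ws' : List (DualArtin k)}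
    (h : IsDualLNF w r ws) (h' : IsDualLNF (w * g) r' ws') (hg : g ∈ dualGens k) :
    ws'.length ≤ ws.length + 1 := by
  obtain ⟨r₂, ws₂, hws₂, hlen, hprod⟩ := exists_mul_mem_dualGens (r := r) h.1 hg
  exact hlen ▸ h'.2.2 r₂ ws₂ hws₂ (by rw [h.2.1, hprod])

end IsDualLNF

theorem dual_normal_form_right_mult_general (k : ℕ) [NeZero k]
    (w g : DualArtin k) (hg : g ∈ dualGens k)
    (r r' : ℤ) (ws ws' : List (DualArtin k))
    (h : IsDualLNF w r ws) (h' : IsDualLNF (w * g) r' ws') :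
    ((r' = r + 1 ∧ (ws'.length : ℤ) = ws.length - 1) ∨
     (r' = r ∧ (ws'.length : ℤ) = ws.length + 1) ∨
     (r' = r ∧ (ws'.length : ℤ) = ws.length - 1) ∨
     (r' = r - 1 ∧ (ws'.length : ℤ) = ws.length + 1)) ∧
    ((r'.natAbs + (r' + ws'.length).natAbs : ℤ) -
        (r.natAbs + (r + ws.length).natAbs : ℤ)).natAbs ≤ 1 := by
  have hle := h.length_le_of_mul h' hg
  have hge := h'.length_le_of_mul (g := g⁻¹) (by rwa [mul_inv_cancel_right]) (inv_mem_dualGens hg)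
  have hdeg := congrArg Multiplicative.toAdd (map_mul (dualDegree k) w g)
  rw [toAdd_mul, h.dualDegree_eq, h'.dualDegree_eq] at hdeg
  rcases dualDegree_of_mem_dualGens hg with hg₁ | hg₁ <;> omega

theorem dual_normal_form_right_mult (k : ℕ) [NeZero k] (hk : 3 ≤ k)
    (w g : DualArtin k) (hg : g ∈ dualGens k)
    (r r' : ℤ) (ws ws' : List (DualArtin k))
    (h : IsDualLNF w r ws) (h' : IsDualLNF (w * g) r' ws') :
    ((r' = r + 1 ∧ (ws'.length : ℤ) = ws.length - 1) ∨
     (r' = r ∧ (ws'.length : ℤ) = ws.length + 1) ∨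
     (r' = r ∧ (ws'.length : ℤ) = ws.length - 1) ∨
     (r' = r - 1 ∧ (ws'.length : ℤ) = ws.length + 1)) ∧
    ((r'.natAbs + (r' + ws'.length).natAbs : ℤ) -
        (r.natAbs + (r + ws.length).natAbs : ℤ)).natAbs ≤ 1 :=
  dual_normal_form_right_mult_general k w g hg r r' ws ws' h h'
end
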